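/- arXiv:0705.2608 — 6 statements merged into one kernel-verified Lean document; each statement's English description precedes it below -/
import Mathlib

section
/- Let p be a prime, k an algebraic closure of the field 𝔽_p with p elements, W = 𝕎(k) the ring of p-typical Witt vectors of k, and P₀ the fraction field of W. Let σ : P₀ ≃ P₀ be the field automorphism induced by the Witt-vector Frobenius automorphism of W. Let V be a finite-dimensional P₀-vector space and φ : V → V an additive σ-semilinear map (φ(c • v) = σ(c) • φ(v)). Then the kernel of 1 − φ : V → V is stable under multiplication by scalars from the fixed subfield P₀^{σ=1}, and as a vector space over this fixed field (which is isomorphic to ℚ_p) it is finite-dimensional, of dimension at most dim_{P₀} V. -/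
/-- The fixed subfield `{c : K | σ c = c}` of a field automorphism `σ`. -/
def RingEquiv.fixedSubfield {K : Type*} [Field K] (σ : K ≃+* K) : Subfield K where
  carrier := {c : K | σ c = c}
  mul_mem' := by
    intro a b (ha : σ a = a) (hb : σ b = b)
    simp only [Set.mem_setOf_eq, map_mul, ha, hb]
  one_mem' := map_one σ
  add_mem' := by
    intro a b (ha : σ a = a) (hb : σ b = b)
    simp only [Set.mem_setOf_eq, map_add, ha, hb]
  zero_mem' := map_zero σ
  neg_mem' := by
    intro a (ha : σ a = a)
    simp only [Set.mem_setOf_eq, map_neg, ha]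
  inv_mem' := by
    intro a (ha : σ a = a)
    simp only [Set.mem_setOf_eq, map_inv₀, ha]

/-!
The fixed vectors `V^{φ=1}` form a vector space over `F = P₀^{σ=1}`. If `b` is a maximal
`P₀`-linearly independent family of fixed vectors and `x` is fixed, write `x = ∑ cᵢ bᵢ`;
applying `φ` gives `x = ∑ σ(cᵢ) bᵢ`, so by uniqueness of coordinates every `cᵢ` lies in `F`.
Hence `V^{φ=1}` is spanned over `F` by at most `dim_{P₀} V` vectors.
-/

namespace LinearMap

open Submodule

variable {P₀ V : Type*} [Field P₀] [AddCommGroup V] [Module P₀ V]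
  {σ : P₀ ≃+* P₀} (f : V →ₛₗ[(σ : P₀ →+* P₀)] V)

def semilinearFixedSubmodule : Submodule σ.fixedSubfield V where
  carrier := {v | f v = v}
  add_mem' {v w} (hv : f v = v) (hw : f w = w) := by
    change f (v + w) = v + w
    rw [map_add, hv, hw]
  zero_mem' := map_zero f
  smul_mem' c v (hv : f v = v) := by
    change f ((c : P₀) • v) = (c : P₀) • v
    rw [map_smulₛₗ, RingHom.coe_coe, c.2, hv]

theorem map_linearCombination_of_forall_fixed {ι : Type*} {v : ι → V} (hv : ∀ i, f (v i) = v i)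
    (c : ι →₀ P₀) :
    f (Finsupp.linearCombination P₀ v c) =
      Finsupp.linearCombination P₀ v (c.mapRange σ (map_zero σ)) := by
  simp [Finsupp.linearCombination_apply, Finsupp.sum_mapRange_index, map_finsuppSum, hv]

theorem mem_span_fixedSubfield_of_mem_span {ι : Type*} {v : ι → V} (hv : ∀ i, f (v i) = v i)
    (hli : LinearIndependent P₀ v) {x : V} (hx : f x = x) (hxv : x ∈ span P₀ (Set.range v)) :
    x ∈ span σ.fixedSubfield (Set.range v) := by
  rw [← Finsupp.range_linearCombination] at hxv
  obtain ⟨c, rfl⟩ := hxv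
  have hc : c.mapRange σ (map_zero σ) = c :=
    hli (by rw [← f.map_linearCombination_of_forall_fixed hv, hx])
  have hcF (i : ι) : σ (c i) = c i := by simpa using DFunLike.congr_fun hc i
  rw [Finsupp.linearCombination_apply]
  exact sum_mem fun i _ ↦
    smul_mem _ (⟨c i, hcF i⟩ : σ.fixedSubfield) (subset_span (Set.mem_range_self i))

theorem exists_finset_semilinearFixedSubmodule_le_span [FiniteDimensional P₀ V] :
    ∃ t : Finset V, t.card ≤ Module.finrank P₀ V ∧
      f.semilinearFixedSubmodule ≤ span σ.fixedSubfield (t : Set V) := by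
  obtain ⟨b, hbK, hspan, hb⟩ := exists_linearIndependent P₀ (f.semilinearFixedSubmodule : Set V)
  lift b to Finset V using hb.set_finite_of_isNoetherian
  refine ⟨b, hb.finset_card_le_finrank, fun x hx ↦ ?_⟩
  have hxb : x ∈ span P₀ (Set.range (Subtype.val : ↥(b : Set V) → V)) := by
    rw [Subtype.range_coe, hspan]
    exact subset_span hx
  simpa using f.mem_span_fixedSubfield_of_mem_span (fun i ↦ hbK i.2) hb hx hxb

end LinearMap

theorem ker_one_sub_frobeniusSemilinear_finiteDimensional_over_fixedField_general
    (P₀ : Type) [Field P₀]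
    (σ : P₀ ≃+* P₀)
    (V : Type) [AddCommGroup V] [Module P₀ V] [FiniteDimensional P₀ V]
    (φ : V →+ V) (hφ : ∀ (c : P₀) (v : V), φ (c • v) = σ c • φ v) :
    (∀ c : P₀, σ c = c → ∀ v : V, v - φ v = 0 → (c • v) - φ (c • v) = 0) ∧
    ∃ K : Submodule σ.fixedSubfield V,
      (K : Set V) = {v : V | v - φ v = 0} ∧
      FiniteDimensional σ.fixedSubfield K ∧
      Module.finrank σ.fixedSubfield K ≤ Module.finrank P₀ V := by
  let f : V →ₛₗ[(σ : P₀ →+* P₀)] V := { φ with map_smul' := hφ }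
  have hK : (f.semilinearFixedSubmodule : Set V) = {v : V | v - φ v = 0} :=
    Set.ext fun _ ↦ (sub_eq_zero.trans eq_comm).symm
  obtain ⟨t, ht, hle⟩ := f.exists_finset_semilinearFixedSubmodule_le_span
  refine ⟨fun c hc v hv ↦ ?_, f.semilinearFixedSubmodule, hK,
    Submodule.finiteDimensional_of_le hle,
    (Submodule.finrank_mono hle).trans ((finrank_span_finset_le_card t).trans ht)⟩
  rw [hφ, hc, ← sub_eq_zero.mp hv, sub_self]

/-- With `k = 𝔽̄_p`, `W = 𝕎(k)`, `P₀ = Frac W` and `σ` the automorphism of `P₀`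
induced by the Witt-vector Frobenius, let `V` be a finite-dimensional
`P₀`-vector space and `φ : V → V` an additive `σ`-semilinear map.  Then the
kernel of `1 - φ` is stable under multiplication by scalars fixed by `σ`, and
as a vector space over the fixed subfield `P₀^{σ=1}` it is finite-dimensional
of dimension at most `dim_{P₀} V`. -/
theorem ker_one_sub_frobeniusSemilinear_finiteDimensional_over_fixedField
    (p : ℕ) [Fact p.Prime]
    (P₀ : Type) [Field P₀]
    [Algebra (WittVector p (AlgebraicClosure (ZMod p))) P₀]
    [IsFractionRing (WittVector p (AlgebraicClosure (ZMod p))) P₀]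
    (σ : P₀ ≃+* P₀)
    (hσ : ∀ w : WittVector p (AlgebraicClosure (ZMod p)),
      σ (algebraMap (WittVector p (AlgebraicClosure (ZMod p))) P₀ w) =
        algebraMap (WittVector p (AlgebraicClosure (ZMod p))) P₀ (WittVector.frobenius w))
    (V : Type) [AddCommGroup V] [Module P₀ V] [FiniteDimensional P₀ V]
    (φ : V →+ V) (hφ : ∀ (c : P₀) (v : V), φ (c • v) = σ c • φ v) :
    (∀ c : P₀, σ c = c → ∀ v : V, v - φ v = 0 → (c • v) - φ (c • v) = 0) ∧
    ∃ K : Submodule σ.fixedSubfield V,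
      (K : Set V) = {v : V | v - φ v = 0} ∧
      FiniteDimensional σ.fixedSubfield K ∧
      Module.finrank σ.fixedSubfield K ≤ Module.finrank P₀ V :=
  ker_one_sub_frobeniusSemilinear_finiteDimensional_over_fixedField_general P₀ σ V φ hφ
end

section
/- Let k be an algebraically closed field of characteristic p > 0, let V be a finite-dimensional k-vector space, and let φ : V → V be an additive map that is Frobenius-semilinear, i.e. φ(c • v) = c^p • φ(v) for all c ∈ k, v ∈ V. Then the additive map 1 − φ : V → V, v ↦ v − φ(v), is surjective. -/
/-!
Given `w`, the iterates `φ^[i] w` span a finite-dimensional space, so some `φ^[m+1] w` is a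
combination `∑ i ≤ m, a i • φ^[i] w`. Looking for a preimage `v = ∑ i ≤ m, b i • φ^[i] w` of `w`
under `1 - φ` and comparing coefficients, each `b i` is a polynomial `B_i` in `t = b m`, and the
one remaining condition is `B_m(t) = t`. Every `B_i` is built from `p`-th powers, so its derivative
vanishes in characteristic `p`; hence `B_m - X` is nonconstant and has a root in `k`.
-/

open Polynomial Finset

theorem IsNoetherian.exists_succ_eq_sum_range_smul {R M : Type*} [Semiring R] [AddCommMonoid M]
    [Module R M] [IsNoetherian R M] (u : ℕ → M) :
    ∃ m, ∃ a : ℕ → R, u (m + 1) = ∑ i ∈ range (m + 1), a i • u i := by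
  let W : ℕ →o Submodule R M :=
    ⟨fun n => Submodule.span R (u '' ↑(range n)), fun _ _ h => Submodule.span_mono (by gcongr)⟩
  obtain ⟨m, hm⟩ := monotone_stabilizes_iff_noetherian.mpr ‹_› W
  have hmem : u (m + 1) ∈ W (m + 1) := by
    rw [← hm (m + 1) m.le_succ, hm (m + 2) (by omega)]
    exact Submodule.subset_span ⟨m + 1, by simp, rfl⟩
  obtain ⟨a, ha⟩ := (Submodule.mem_span_image_finset_iff_exists_fun' R).mp hmem
  exact ⟨m, a, ha.symm⟩

/-- `b_i = B_i(t)` solves the coefficient equations `b_0 - t^p a_0 = 1`,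
`b_{i+1} - t^p a_{i+1} = b_i^p` of `v - φ v = w` for `v = ∑ i ≤ m, b i • φ^[i] w`, when
`φ^[m+1] w = ∑ i ≤ m, a i • φ^[i] w` and `t = b_m`. -/
noncomputable def orbitCoeffPoly {R : Type*} [CommSemiring R] (p : ℕ) (a : ℕ → R) : ℕ → R[X]
  | 0 => C (a 0) * X ^ p + 1
  | i + 1 => orbitCoeffPoly p a i ^ p + C (a (i + 1)) * X ^ p

theorem derivative_orbitCoeffPoly {R : Type*} [CommSemiring R] {p : ℕ} (hp : (p : R) = 0)
    (a : ℕ → R) (i : ℕ) : derivative (orbitCoeffPoly p a i) = 0 := by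
  induction i <;> simp [orbitCoeffPoly, derivative_pow, hp]

theorem IsAlgClosed.exists_eval_orbitCoeffPoly_eq {k : Type*} [Field k] [IsAlgClosed k] {p : ℕ}
    (hp : (p : k) = 0) (a : ℕ → k) (m : ℕ) : ∃ t, (orbitCoeffPoly p a m).eval t = t := by
  have hder : derivative (orbitCoeffPoly p a m - X) ≠ 0 := by
    simp [derivative_orbitCoeffPoly hp]
  obtain ⟨t, ht⟩ := IsAlgClosed.exists_root _
    fun h => hder (derivative_of_natDegree_zero (natDegree_eq_of_degree_eq_some h))
  exact ⟨t, sub_eq_zero.mp (by simpa using ht)⟩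

theorem sub_map_sum_eval_orbitCoeffPoly_smul_iterate {k V : Type*} [CommSemiring k] [AddCommGroup V]
    [Module k V] {p : ℕ} (φ : V →+ V) (hφ : ∀ (c : k) (v : V), φ (c • v) = c ^ p • φ v)
    {w : V} {m : ℕ} {a : ℕ → k} (ha : φ^[m + 1] w = ∑ i ∈ range (m + 1), a i • φ^[i] w)
    {t : k} (ht : (orbitCoeffPoly p a m).eval t = t) :
    (∑ i ∈ range (m + 1), (orbitCoeffPoly p a i).eval t • φ^[i] w) -
      φ (∑ i ∈ range (m + 1), (orbitCoeffPoly p a i).eval t • φ^[i] w) = w := by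
  set u : ℕ → V := fun i => φ^[i] w
  set b : ℕ → k := fun i => (orbitCoeffPoly p a i).eval t
  have hu : ∀ i, φ (u i) = u (i + 1) := fun i => (Function.iterate_succ_apply' φ i w).symm
  have hb_zero : b 0 = t ^ p * a 0 + 1 := by
    simp only [b, orbitCoeffPoly, eval_add, eval_mul, eval_C, eval_pow, eval_X, eval_one, mul_comm]
  have hb_succ : ∀ i, b (i + 1) = b i ^ p + t ^ p * a (i + 1) := by
    simp only [b, orbitCoeffPoly, eval_add, eval_mul, eval_C, eval_pow, eval_X, mul_comm,
      implies_true]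
  have hrel : t ^ p • u (m + 1) = ∑ i ∈ range (m + 1), (t ^ p * a i) • u i := by
    simp only [u, ha, smul_sum, smul_smul]
  have hφv : φ (∑ i ∈ range (m + 1), b i • u i) =
      ∑ i ∈ range m, b i ^ p • u (i + 1) + t ^ p • u (m + 1) := by
    rw [map_sum, sum_range_succ]
    simp only [hφ, hu, b, ht]
  have hv : ∑ i ∈ range (m + 1), b i • u i =
      ∑ i ∈ range m, b i ^ p • u (i + 1) + t ^ p • u (m + 1) + w := by
    rw [sum_range_succ']
    simp only [hb_succ, hb_zero, add_smul, sum_add_distrib, hrel, one_smul]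
    rw [sum_range_succ' _ m]
    abel
  rw [hφv, hv, add_sub_cancel_left]

theorem surjective_one_sub_frobeniusSemilinear_algClosed_general
    (p : ℕ)
    (k : Type) [Field k] [IsAlgClosed k] [CharP k p]
    (V : Type) [AddCommGroup V] [Module k V] [FiniteDimensional k V]
    (φ : V →+ V) (hφ : ∀ (c : k) (v : V), φ (c • v) = c ^ p • φ v) :
    Function.Surjective (fun v : V => v - φ v) := by
  intro w
  obtain ⟨m, a, ha⟩ := IsNoetherian.exists_succ_eq_sum_range_smul (R := k) (φ^[·] w)
  obtain ⟨t, ht⟩ := IsAlgClosed.exists_eval_orbitCoeffPoly_eq (CharP.cast_eq_zero k p) a m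
  exact ⟨_, sub_map_sum_eval_orbitCoeffPoly_smul_iterate φ hφ ha ht⟩

/-- Let `k` be an algebraically closed field of characteristic `p > 0`, `V` a
finite-dimensional `k`-vector space and `φ : V → V` an additive
Frobenius-semilinear map (`φ (c • v) = c ^ p • φ v`).  Then
`1 - φ : V → V`, `v ↦ v - φ v`, is surjective. -/
theorem surjective_one_sub_frobeniusSemilinear_algClosed
    (p : ℕ) (hp : 0 < p)
    (k : Type) [Field k] [IsAlgClosed k] [CharP k p]
    (V : Type) [AddCommGroup V] [Module k V] [FiniteDimensional k V]
    (φ : V →+ V) (hφ : ∀ (c : k) (v : V), φ (c • v) = c ^ p • φ v) :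
    Function.Surjective (fun v : V => v - φ v) :=
  surjective_one_sub_frobeniusSemilinear_algClosed_general p k V φ hφ
end

section
/- Let k be an algebraically closed field of characteristic p > 0, let V be a finite-dimensional k-vector space of dimension n, and let φ : V → V be an additive Frobenius-semilinear map (φ(c • v) = c^p • φ(v)). Then the kernel of 1 − φ : V → V, v ↦ v − φ(v), is an 𝔽_p-subspace of V that is finite, of cardinality at most p^n. -/
/-!
Let `b` be a `k`-basis of the `k`-span of the fixed points of `φ`, chosen among the fixed points.
A fixed point `v = ∑ cᵢ bᵢ` also equals `φ v = ∑ cᵢ ^ p bᵢ`, so by independence every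
coordinate satisfies `cᵢ ^ p = cᵢ`, i.e. lies in the prime field `𝔽_p`. Hence the fixed points
are among the `p ^ |b| ≤ p ^ dim V` combinations of `b` with coefficients in `𝔽_p`.
-/

open Submodule

section FrobeniusSemilinear

variable {p : ℕ} [Fact p.Prime] {k : Type*} [Field k] [CharP k p]
  {V : Type*} [AddCommGroup V] [Module k V]
  {φ : V →+ V}

theorem exists_bot_coeffs_of_isFixedPt_of_mem_span
    (hφ : ∀ (c : k) (v : V), φ (c • v) = c ^ p • φ v) {ι : Type*} [Fintype ι] {b : ι → V}
    (hb : LinearIndependent k b) (hbφ : ∀ i, φ (b i) = b i)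
    {v : V} (hv : v ∈ span k (Set.range b)) (hvφ : φ v = v) :
    ∃ c : ι → (⊥ : Subfield k), ∑ i, (c i : k) • b i = v := by
  obtain ⟨c, rfl⟩ := (mem_span_range_iff_exists_fun k).mp hv
  have hc : ∑ i, (c i ^ p - c i) • b i = 0 := by
    simpa [sub_smul, sub_eq_zero, map_sum, hφ, hbφ] using hvφ
  refine ⟨fun i => ⟨c i, (Subfield.mem_bot_iff_pow_eq_self k p).mpr ?_⟩, rfl⟩
  exact sub_eq_zero.mp (Fintype.linearIndependent_iff.mp hb _ hc i)

theorem finite_fixedPoints_and_card_le [FiniteDimensional k V]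
    (hφ : ∀ (c : k) (v : V), φ (c • v) = c ^ p • φ v) :
    (Function.fixedPoints φ).Finite ∧
      Nat.card (Function.fixedPoints φ) ≤ p ^ Module.finrank k V := by
  set S := Function.fixedPoints φ
  obtain ⟨b, hbS, hspan, hb⟩ := exists_linearIndependent k S
  have : Fintype b := hb.setFinite.fintype
  have : Finite (⊥ : Subfield k) :=
    Nat.finite_of_card_ne_zero (by simp [Subfield.card_bot k p, (Fact.out : p.Prime).ne_zero])
  have hS : S ⊆ Set.range fun c : b → (⊥ : Subfield k) => ∑ i, (c i : k) • (i : V) :=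
    fun v hv => exists_bot_coeffs_of_isFixedPt_of_mem_span hφ (b := ((↑) : b → V)) hb
      (fun i => hbS i.2) (by simpa [hspan] using subset_span hv) hv
  refine ⟨(Set.finite_range _).subset hS, ?_⟩
  calc Nat.card S ≤ Nat.card (Set.range _) := Nat.card_mono (Set.finite_range _) hS
    _ ≤ Nat.card (b → (⊥ : Subfield k)) := Finite.card_range_le _
    _ = p ^ Nat.card b := by rw [Nat.card_fun, Subfield.card_bot k p]
    _ ≤ p ^ Module.finrank k V := Nat.pow_le_pow_right (Fact.out : p.Prime).pos
          (by simpa [Nat.card_eq_fintype_card] using hb.fintype_card_le_finrank)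

end FrobeniusSemilinear

theorem ker_one_sub_frobeniusSemilinear_finite_card_le_general
    (p : ℕ) (hp : 0 < p)
    (k : Type) [Field k] [CharP k p]
    (V : Type) [AddCommGroup V] [Module k V] [FiniteDimensional k V]
    (φ : V →+ V) (hφ : ∀ (c : k) (v : V), φ (c • v) = c ^ p • φ v) :
    (∀ v w : V, v - φ v = 0 → w - φ w = 0 → (v + w) - φ (v + w) = 0) ∧
    (∀ (c : ZMod p) (v : V), v - φ v = 0 →
      (ZMod.castHom (dvd_refl p) k c • v) - φ (ZMod.castHom (dvd_refl p) k c • v) = 0) ∧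
    ({v : V | v - φ v = 0}).Finite ∧
    Nat.card {v : V | v - φ v = 0} ≤ p ^ Module.finrank k V := by
  have : Fact p.Prime := ⟨(CharP.char_is_prime_or_zero k p).resolve_right hp.ne'⟩
  have hker : {v : V | v - φ v = 0} = Function.fixedPoints φ := by
    ext v
    exact sub_eq_zero.trans eq_comm
  refine ⟨fun v w hv hw => ?_, fun c v hv => ?_, hker ▸ finite_fixedPoints_and_card_le hφ⟩
  · rw [sub_eq_zero] at hv hw ⊢
    rw [map_add, ← hv, ← hw]
  · rw [sub_eq_zero] at hv ⊢
    rw [hφ, ← map_pow, ZMod.pow_card, ← hv]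

/-- Let `k` be an algebraically closed field of characteristic `p > 0`, `V` a
finite-dimensional `k`-vector space of dimension `n`, and `φ : V → V` an
additive Frobenius-semilinear map (`φ (c • v) = c ^ p • φ v`).  Then the
kernel of `1 - φ` is an `𝔽_p`-subspace of `V` (closed under addition and
under scalar multiplication by elements of the prime field `𝔽_p ⊆ k`), is
finite, and has cardinality at most `p ^ n`. -/
theorem ker_one_sub_frobeniusSemilinear_finite_card_le
    (p : ℕ) (hp : 0 < p)
    (k : Type) [Field k] [IsAlgClosed k] [CharP k p]
    (V : Type) [AddCommGroup V] [Module k V] [FiniteDimensional k V]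
    (φ : V →+ V) (hφ : ∀ (c : k) (v : V), φ (c • v) = c ^ p • φ v) :
    (∀ v w : V, v - φ v = 0 → w - φ w = 0 → (v + w) - φ (v + w) = 0) ∧
    (∀ (c : ZMod p) (v : V), v - φ v = 0 →
      (ZMod.castHom (dvd_refl p) k c • v) - φ (ZMod.castHom (dvd_refl p) k c • v) = 0) ∧
    ({v : V | v - φ v = 0}).Finite ∧
    Nat.card {v : V | v - φ v = 0} ≤ p ^ Module.finrank k V :=
  ker_one_sub_frobeniusSemilinear_finite_card_le_general p hp k V φ hφ
end

section
/- Let Λ = ℤ_p[[T]] be the ring of formal power series over the p-adic integers, and let 𝔭 = (p) be the ideal of Λ generated by p, which is a prime ideal of height one (the quotient Λ/(p) is isomorphic to the domain 𝔽_p[[T]]). For a finitely generated torsion Λ-module M, the localization M_𝔭 of M at the prime ideal 𝔭 is zero if and only if M is finitely generated as a ℤ_p-module. (Equivalently: the μ-invariant μ(M), defined as the length of M_𝔭 over the localized ring Λ_𝔭, vanishes if and only if M is a finitely generated ℤ_p-module.) -/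
/-!
Both conditions say that `M` is killed by some `g ∈ Λ` whose reduction mod `p` is nonzero.
For the localization this is the description of the support of a finite module by its
annihilator, since `g ∉ (p)` means exactly that `g mod p ≠ 0`. If `M` is finite over `ℤ_p`,
Cayley–Hamilton for the action of `T` gives a monic `q` with `q(T) M = 0`. Conversely, if `g`
kills `M`, then `M` is a finite module over `Λ/(g)`, which Weierstrass division shows to be
generated over `ℤ_p` by `1, T, …, T^(n-1)`, `n` being the order of `g mod p`.
-/

open IsLocalRing PowerSeries

theorem Module.Finite.of_isTorsionBy {R S M : Type*} [CommRing R] [CommRing S] [Algebra R S]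
    [AddCommGroup M] [Module R M] [Module S M] [IsScalarTower R S M] {g : S}
    [Module.Finite R (S ⧸ Ideal.span {g})] [Module.Finite S M] (hM : Module.IsTorsionBy S M g) :
    Module.Finite R M := by
  let := hM.module
  have : Module.Finite (S ⧸ Ideal.span {g}) M := .of_restrictScalars_finite S _ M
  exact .trans (S ⧸ Ideal.span {g}) M

theorem LocalizedModule.subsingleton_iff_exists_isTorsionBy {R M : Type*} [CommRing R]
    [AddCommGroup M] [Module R M] [Module.Finite R M] (P : Ideal R) [P.IsPrime] :
    Subsingleton (LocalizedModule P.primeCompl M) ↔ ∃ r ∉ P, Module.IsTorsionBy R M r := by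
  rw [← Module.notMem_support_iff (p := ⟨P, ‹_›⟩), Module.mem_support_iff_of_finite,
    SetLike.not_le_iff_exists]
  simp only [Module.isTorsionBy_iff_mem_annihilator]
  exact exists_congr fun _ => and_comm

namespace PowerSeries

variable {A : Type*} [CommRing A]

theorem C_dvd_iff_dvd_coeff (a : A) (f : A⟦X⟧) : C a ∣ f ↔ ∀ n, a ∣ coeff n f := by
  constructor
  · rintro ⟨g, rfl⟩ n
    exact ⟨coeff n g, coeff_C_mul n g a⟩
  · intro h
    choose g hg using h
    exact ⟨mk g, ext fun n => by rw [coeff_C_mul, coeff_mk, hg]⟩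

theorem map_residue_eq_zero_iff_C_dvd [IsLocalRing A] {ϖ : A}
    (hϖ : maximalIdeal A = Ideal.span {ϖ}) (f : A⟦X⟧) :
    f.map (residue A) = 0 ↔ C ϖ ∣ f := by
  rw [C_dvd_iff_dvd_coeff, PowerSeries.ext_iff]
  simp only [coeff_map, map_zero, residue_eq_zero_iff, hϖ, Ideal.mem_span_singleton]

theorem map_residue_coe_ne_zero_of_monic [IsLocalRing A] {q : Polynomial A} (hq : q.Monic) :
    (q : A⟦X⟧).map (residue A) ≠ 0 := by
  rw [← Polynomial.polynomial_map_coe, Ne, Polynomial.coe_eq_zero_iff]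
  exact (hq.map _).ne_zero

theorem finite_quotient_span_singleton [IsLocalRing A] [IsAdicComplete (maximalIdeal A) A]
    {g : A⟦X⟧} (hg : g.map (residue A) ≠ 0) : Module.Finite A (A⟦X⟧ ⧸ Ideal.span {g}) := by
  set n := (g.map (residue A)).order.toNat
  let φ : Polynomial.degreeLT A n →ₗ[A] A⟦X⟧ ⧸ Ideal.span {g} :=
    (Ideal.Quotient.mkₐ A _).toLinearMap ∘ₗ (Polynomial.coeToPowerSeries.algHom A).toLinearMap ∘ₗ
      (Polynomial.degreeLT A n).subtype
  have : Module.Finite A (Polynomial.degreeLT A n) := .equiv (Polynomial.degreeLTEquiv A n).symm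
  refine .of_surjective φ fun q => ?_
  obtain ⟨f, rfl⟩ := Ideal.Quotient.mk_surjective q
  refine ⟨⟨f %ʷ g, Polynomial.mem_degreeLT.mpr (degree_weierstrassMod_lt f g)⟩, ?_⟩
  change Ideal.Quotient.mk _ (PowerSeries.map (algebraMap A A) (f %ʷ g : A⟦X⟧)) = _
  rw [Algebra.algebraMap_self, map_id, id, Ideal.Quotient.eq, Ideal.mem_span_singleton]
  exact ⟨-(f /ʷ g), by linear_combination -eq_mul_weierstrassDiv_add_weierstrassMod f hg⟩

section Module

variable {M : Type*} [AddCommGroup M] [Module A⟦X⟧ M] [Module A M] [IsScalarTower A A⟦X⟧ M]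

theorem exists_monic_isTorsionBy_coe [Module.Finite A M] :
    ∃ q : Polynomial A, q.Monic ∧ Module.IsTorsionBy A⟦X⟧ M (q : A⟦X⟧) := by
  have : SMulCommClass A⟦X⟧ A M := .symm _ _ _
  let ψ : Polynomial A →ₐ[A] Module.End A M :=
    (Algebra.lsmul A A M).comp (Polynomial.coeToPowerSeries.algHom A)
  obtain ⟨q, hq, hψ⟩ := LinearMap.exists_monic_and_aeval_eq_zero A (ψ Polynomial.X)
  refine ⟨q, hq, fun m => ?_⟩
  rw [Polynomial.aeval_algHom_apply, Polynomial.aeval_X_left_apply] at hψ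
  simpa [ψ] using LinearMap.congr_fun hψ m

theorem finite_iff_exists_isTorsionBy [IsLocalRing A] [IsAdicComplete (maximalIdeal A) A]
    [Module.Finite A⟦X⟧ M] :
    Module.Finite A M ↔ ∃ g : A⟦X⟧, g.map (residue A) ≠ 0 ∧ Module.IsTorsionBy A⟦X⟧ M g := by
  constructor
  · intro
    obtain ⟨q, hq, hM⟩ := exists_monic_isTorsionBy_coe (A := A) (M := M)
    exact ⟨q, map_residue_coe_ne_zero_of_monic hq, hM⟩
  · rintro ⟨g, hg, hM⟩
    have := finite_quotient_span_singleton hg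
    exact .of_isTorsionBy hM

end Module

end PowerSeries

theorem localization_at_p_eq_zero_iff_finite_over_Zp_general
    (p : ℕ) [Fact p.Prime]
    (P : Ideal (PowerSeries ℤ_[p])) (hP : P = Ideal.span {(p : PowerSeries ℤ_[p])})
    [P.IsPrime]
    (M : Type) [AddCommGroup M] [Module (PowerSeries ℤ_[p]) M]
    [Module ℤ_[p] M] [IsScalarTower ℤ_[p] (PowerSeries ℤ_[p]) M]
    (hfin : Module.Finite (PowerSeries ℤ_[p]) M) :
    Subsingleton (LocalizedModule P.primeCompl M) ↔ Module.Finite ℤ_[p] M := by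
  subst hP
  have hp : ((p : ℕ) : ℤ_[p]⟦X⟧) = C (p : ℤ_[p]) := (map_natCast C p).symm
  rw [LocalizedModule.subsingleton_iff_exists_isTorsionBy, finite_iff_exists_isTorsionBy]
  simp only [Ideal.mem_span_singleton, hp,
    ← map_residue_eq_zero_iff_C_dvd PadicInt.maximalIdeal_eq_span_p]

/-- Let `Λ = ℤ_p[[T]]` and let `𝔭 = (p)` be the (height-one prime) ideal of `Λ`
generated by `p`.  For a finitely generated torsion `Λ`-module `M`, the
localization `M_𝔭` of `M` at `𝔭` is zero if and only if `M` is finitely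
generated as a `ℤ_p`-module (i.e. the `μ`-invariant of `M` vanishes iff `M`
is a finitely generated `ℤ_p`-module). -/
theorem localization_at_p_eq_zero_iff_finite_over_Zp
    (p : ℕ) [Fact p.Prime]
    (P : Ideal (PowerSeries ℤ_[p])) (hP : P = Ideal.span {(p : PowerSeries ℤ_[p])})
    [P.IsPrime]
    (M : Type) [AddCommGroup M] [Module (PowerSeries ℤ_[p]) M]
    [Module ℤ_[p] M] [IsScalarTower ℤ_[p] (PowerSeries ℤ_[p]) M]
    (hfin : Module.Finite (PowerSeries ℤ_[p]) M)
    (htors : Module.IsTorsion (PowerSeries ℤ_[p]) M) :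
    Subsingleton (LocalizedModule P.primeCompl M) ↔ Module.Finite ℤ_[p] M :=
  localization_at_p_eq_zero_iff_finite_over_Zp_general p P hP M hfin
end

section
/- Let d ≥ 1 and let Λ = ℤ_p[[T₁, …, T_d]] be the ring of formal power series in d variables over the p-adic integers (the Iwasawa algebra of the abelian p-adic Lie group ℤ_p^d), equipped with its natural (product) topology, for which it is a topological ring. Let X be a compact Hausdorff topological abelian group equipped with a continuous Λ-module structure. If the quotient X/(T₁, …, T_d)X of X by the closed submodule generated by T₁X, …, T_dX (the coinvariant quotient, corresponding to the coinvariants X_H for H = ℤ_p^d) is a finitely generated ℤ_p-module, then X is a finitely generated Λ-module. -/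
/-!
Write `I = (T₁, …, T_d)` and `Jₘ = (T₁ᵐ, …, T_dᵐ)`. Since `I • X` is the image of the compact
space `Xᵈ` under `(wᵢ) ↦ ∑ Tᵢ wᵢ`, it is already closed, so lifting finitely many generators of
`X / I X` gives a finitely generated submodule `Y` with `Y + I X = X`. Then `Y + Iⁿ X = X` for
all `n`, and `Iⁿ ⊆ Jₘ` for `n` large, so `Y + Jₘ X = X` for every `m`. As `Tᵢᵐ → 0` in `Λ` and
`X` is compact, `Jₘ X` lies in any given neighbourhood of `0` for `m` large, so `Y` is dense.
Being the image of the compact space `Λ^k`, `Y` is closed, hence `Y = X`.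
-/

noncomputable instance mvPowerSeriesPiTopology (σ R : Type*) [TopologicalSpace R] :
    TopologicalSpace (MvPowerSeries σ R) :=
  Pi.topologicalSpace (ι := σ →₀ ℕ) (Y := fun _ => R)

open Filter Topology Set

namespace Submodule

section Algebra

variable {R M : Type*}

section CommSemiring

variable [CommSemiring R] [AddCommMonoid M] [Module R M]

theorem sup_pow_smul_top_eq_top {Y : Submodule R M} {I : Ideal R} (h : Y ⊔ I • ⊤ = ⊤) :
    ∀ n : ℕ, Y ⊔ I ^ n • ⊤ = ⊤
  | 0 => by rw [pow_zero, Ideal.one_eq_top, top_smul, sup_top_eq]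
  | n + 1 => eq_top_iff.2 <| calc
      ⊤ = Y ⊔ I ^ n • (Y ⊔ I • ⊤) := by rw [h, sup_pow_smul_top_eq_top h n]
      _ = Y ⊔ I ^ n • Y ⊔ I ^ (n + 1) • ⊤ := by rw [smul_sup, pow_succ, mul_smul, sup_assoc]
      _ ≤ Y ⊔ I ^ (n + 1) • ⊤ := by rw [sup_eq_left.2 (smul_le_right : I ^ n • Y ≤ Y)]

theorem sup_span_range_pow_smul_top_eq_top {Y : Submodule R M} {ι : Type*} [Finite ι]
    {x : ι → R} (h : Y ⊔ Ideal.span (range x) • ⊤ = ⊤) (m : ℕ) :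
    Y ⊔ Ideal.span (range fun i ↦ x i ^ m) • ⊤ = ⊤ := by
  have hrad : Ideal.span (range x) ≤ (Ideal.span (range fun i ↦ x i ^ m)).radical :=
    Ideal.span_le.2 <| by rintro _ ⟨i, rfl⟩; exact ⟨m, Ideal.subset_span ⟨i, rfl⟩⟩
  obtain ⟨n, hn⟩ := Ideal.exists_pow_le_of_le_radical_of_fg hrad (fg_span (finite_range x))
  exact eq_top_iff.2 <|
    (sup_pow_smul_top_eq_top h n).ge.trans <| sup_le_sup_left (smul_mono_left hn) Y

theorem coe_span_range_smul_top {ι : Type*} [Fintype ι] (x : ι → R) :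
    ((Ideal.span (range x) • ⊤ : Submodule R M) : Set M) =
      range fun w : ι → M ↦ ∑ i, x i • w i := by
  ext z
  constructor
  · intro hz
    refine smul_induction_on hz (fun r hr y _ ↦ ?_) ?_
    · obtain ⟨c, rfl⟩ := (mem_span_range_iff_exists_fun R).1 hr
      exact ⟨fun i ↦ c i • y, by simp only [smul_smul, ← Finset.sum_smul, smul_eq_mul, mul_comm]⟩
    · rintro _ _ ⟨w, rfl⟩ ⟨w', rfl⟩
      exact ⟨w + w', by simp only [Pi.add_apply, smul_add, Finset.sum_add_distrib]⟩
  · rintro ⟨w, rfl⟩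
    exact sum_mem fun i _ ↦ smul_mem_smul (Ideal.subset_span ⟨i, rfl⟩) mem_top

end CommSemiring

theorem exists_fg_sup_eq_top [Ring R] [AddCommGroup M] [Module R M] (N : Submodule R M)
    [Module.Finite R (M ⧸ N)] : ∃ Y : Submodule R M, Y.FG ∧ Y ⊔ N = ⊤ := by
  obtain ⟨s, hs⟩ := Module.Finite.fg_top (R := R) (M := M ⧸ N)
  let lift := Function.surjInv N.mkQ_surjective
  refine ⟨span R (lift '' s), fg_span (s.finite_toSet.image lift), ?_⟩
  have hmap : (span R (lift '' s)).map N.mkQ = ⊤ := by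
    rw [map_span, ← image_comp, (Function.rightInverse_surjInv N.mkQ_surjective).comp_eq_id,
      image_id, hs]
  rw [sup_comm, ← comap_map_mkQ, hmap, comap_top]

end Algebra

section Topology

variable {R M : Type*} [TopologicalSpace M] [AddCommGroup M]

theorem FG.isClosed [Semiring R] [TopologicalSpace R] [CompactSpace R] [Module R M]
    [T2Space M] [ContinuousAdd M] [ContinuousSMul R M] {Y : Submodule R M} (hY : Y.FG) :
    IsClosed (Y : Set M) := by
  obtain ⟨n, v, rfl⟩ := fg_iff_exists_fin_generating_family.1 hY
  rw [← Fintype.range_linearCombination, LinearMap.coe_range]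
  refine (isCompact_range ?_).isClosed
  change Continuous fun a : Fin n → R ↦ ∑ i, a i • v i
  fun_prop

theorem isClosed_span_range_smul_top [CommSemiring R] [TopologicalSpace R] [Module R M]
    [CompactSpace M] [T2Space M] [ContinuousAdd M] [ContinuousConstSMul R M]
    {ι : Type*} [Fintype ι] (x : ι → R) :
    IsClosed ((Ideal.span (range x) • ⊤ : Submodule R M) : Set M) := by
  rw [coe_span_range_smul_top]
  exact (isCompact_range (by fun_prop)).isClosed

theorem eventually_forall_sum_smul_mem [Semiring R] [TopologicalSpace R] [Module R M]
    [CompactSpace M] [ContinuousAdd M] [ContinuousSMul R M] {ι : Type*} [Fintype ι]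
    {W : Set M} (hW : W ∈ 𝓝 0) :
    ∀ᶠ a in 𝓝 (0 : ι → R), ∀ w : ι → M, ∑ i, a i • w i ∈ W := by
  have hcont : Continuous fun aw : (ι → R) × (ι → M) ↦ ∑ i, aw.1 i • aw.2 i := by fun_prop
  refine (isCompact_univ.eventually_forall_of_forall_eventually fun w _ ↦ ?_).mono
    fun a ha w ↦ ha w (mem_univ w)
  exact hcont.continuousAt.preimage_mem_nhds (by simpa using hW)

theorem eventually_span_range_pow_smul_top_subset [CommSemiring R] [TopologicalSpace R]
    [Module R M] [CompactSpace M] [ContinuousAdd M] [ContinuousSMul R M]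
    {ι : Type*} [Fintype ι] {x : ι → R} (hx : ∀ i, IsTopologicallyNilpotent (x i))
    {W : Set M} (hW : W ∈ 𝓝 0) :
    ∀ᶠ m in atTop, ((Ideal.span (range fun i ↦ x i ^ m) • ⊤ : Submodule R M) : Set M) ⊆ W := by
  have hpow : Tendsto (fun m i ↦ x i ^ m) atTop (𝓝 (0 : ι → R)) := tendsto_pi_nhds.2 hx
  filter_upwards [hpow.eventually (eventually_forall_sum_smul_mem hW)] with m hm
  rw [coe_span_range_smul_top]
  rintro _ ⟨w, rfl⟩
  exact hm w

theorem eq_top_of_isClosed_of_forall_nhds_zero [Semiring R] [Module R M] [IsTopologicalAddGroup M]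
    {Y : Submodule R M} (hY : IsClosed (Y : Set M))
    (h : ∀ W ∈ 𝓝 (0 : M), ∃ N : Submodule R M, Y ⊔ N = ⊤ ∧ (N : Set M) ⊆ W) : Y = ⊤ := by
  refine eq_top_iff.2 fun x _ ↦ hY.closure_subset <| mem_closure_iff_nhds.2 fun t ht ↦ ?_
  have hW : (x - ·) ⁻¹' t ∈ 𝓝 (0 : M) :=
    (continuous_const.sub continuous_id).continuousAt.preimage_mem_nhds (by simpa using ht)
  obtain ⟨N, hYN, hNW⟩ := h _ hW
  obtain ⟨y, hy, n, hn, rfl⟩ := mem_sup.1 (hYN ▸ mem_top : x ∈ Y ⊔ N)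
  exact ⟨y, by simpa using hNW hn, hy⟩

end Topology

end Submodule

theorem Module.Finite.of_finite_quotient_span_range_smul_top {R M : Type*} [CommRing R]
    [TopologicalSpace R] [CompactSpace R] [AddCommGroup M] [Module R M] [TopologicalSpace M]
    [CompactSpace M] [T2Space M] [IsTopologicalAddGroup M] [ContinuousSMul R M]
    {ι : Type*} [Fintype ι] {x : ι → R} (hx : ∀ i, IsTopologicallyNilpotent (x i))
    (hQ : Module.Finite R (M ⧸ (Ideal.span (Set.range x) • ⊤ : Submodule R M))) :
    Module.Finite R M := by
  obtain ⟨Y, hYfg, hY⟩ :=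
    Submodule.exists_fg_sup_eq_top (Ideal.span (Set.range x) • ⊤ : Submodule R M)
  suffices Y = ⊤ from ⟨this ▸ hYfg⟩
  refine Submodule.eq_top_of_isClosed_of_forall_nhds_zero hYfg.isClosed fun W hW ↦ ?_
  obtain ⟨m, hm⟩ := (Submodule.eventually_span_range_pow_smul_top_subset hx hW).exists
  exact ⟨_, Submodule.sup_span_range_pow_smul_top_eq_top hY m, hm⟩

theorem finite_over_iwasawaAlgebra_of_coinvariants_finite_over_Zp_general
    (p : ℕ) [Fact p.Prime] (d : ℕ)
    (X : Type) [AddCommGroup X] [TopologicalSpace X] [IsTopologicalAddGroup X]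
    [CompactSpace X] [T2Space X]
    [Module (MvPowerSeries (Fin d) ℤ_[p]) X]
    [ContinuousSMul (MvPowerSeries (Fin d) ℤ_[p]) X]
    [Module ℤ_[p] X] [IsScalarTower ℤ_[p] (MvPowerSeries (Fin d) ℤ_[p]) X]
    (hQ : Module.Finite ℤ_[p]
      (X ⧸ (Ideal.span
          (Set.range (MvPowerSeries.X : Fin d → MvPowerSeries (Fin d) ℤ_[p])) •
        (⊤ : Submodule (MvPowerSeries (Fin d) ℤ_[p]) X)).topologicalClosure)) :
    Module.Finite (MvPowerSeries (Fin d) ℤ_[p]) X := by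
  have : CompactSpace (MvPowerSeries (Fin d) ℤ_[p]) := Pi.compactSpace
  have hX (i : Fin d) :
      IsTopologicallyNilpotent (MvPowerSeries.X i : MvPowerSeries (Fin d) ℤ_[p]) :=
    MvPowerSeries.WithPiTopology.isTopologicallyNilpotent_of_constantCoeff_zero
      (MvPowerSeries.constantCoeff_X i)
  rw [(Submodule.isClosed_span_range_smul_top _).submodule_topologicalClosure_eq] at hQ
  exact .of_finite_quotient_span_range_smul_top hX (.of_restrictScalars_finite ℤ_[p] _ _)

/-- Balister–Howson style Nakayama lemma.
Let `Λ = ℤ_p[[T₁, …, T_d]]` (`d ≥ 1`) with its natural product topology, and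
let `X` be a compact Hausdorff topological abelian group with a continuous
`Λ`-module structure.  If the quotient of `X` by the closed submodule
generated by `T₁X, …, T_dX` (the coinvariant quotient `X_H` for `H = ℤ_p^d`)
is a finitely generated `ℤ_p`-module, then `X` is a finitely generated
`Λ`-module. -/
theorem finite_over_iwasawaAlgebra_of_coinvariants_finite_over_Zp
    (p : ℕ) [Fact p.Prime] (d : ℕ) (hd : 1 ≤ d)
    (X : Type) [AddCommGroup X] [TopologicalSpace X] [IsTopologicalAddGroup X]
    [CompactSpace X] [T2Space X]
    [Module (MvPowerSeries (Fin d) ℤ_[p]) X]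
    [ContinuousSMul (MvPowerSeries (Fin d) ℤ_[p]) X]
    [Module ℤ_[p] X] [IsScalarTower ℤ_[p] (MvPowerSeries (Fin d) ℤ_[p]) X]
    (hQ : Module.Finite ℤ_[p]
      (X ⧸ (Ideal.span
          (Set.range (MvPowerSeries.X : Fin d → MvPowerSeries (Fin d) ℤ_[p])) •
        (⊤ : Submodule (MvPowerSeries (Fin d) ℤ_[p]) X)).topologicalClosure)) :
    Module.Finite (MvPowerSeries (Fin d) ℤ_[p]) X :=
  finite_over_iwasawaAlgebra_of_coinvariants_finite_over_Zp_general p d X hQ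
end

section
/- Let p be a prime and let k be an algebraic closure of the field 𝔽_p with p elements. For every Witt vector x ∈ 𝕎(k) and every natural number n, there exists a finite subfield k₀ ⊆ k and an element y ∈ 𝕎(k₀) such that x − 𝕎(ι)(y) ∈ p^n 𝕎(k), where 𝕎(ι) : 𝕎(k₀) → 𝕎(k) is the ring homomorphism induced by the inclusion ι : k₀ ↪ k. In other words, the union of the images of 𝕎(k₀) over all finite subfields k₀ of k is dense in 𝕎(k) for the p-adic topology, so that 𝕎(k) is the p-adic completion of the colimit of the rings 𝕎(k₀). -/
/-!
Over a perfect ring of characteristic `p`, two Witt vectors with the same first `n` coordinates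
differ by a multiple of `p ^ n`. The first `n` coordinates of `x` generate a finite extension of
`𝔽_p`, hence a finite subfield, and a Witt vector over it with these coordinates does the job.
-/

namespace WittVector

variable {p : ℕ} [Fact p.Prime]

theorem exists_map_coeff_eq_of_mem_range {R S : Type*} [CommRing R] [CommRing S] (f : S →+* R)
    (x : WittVector p R) (n : ℕ) (h : ∀ i < n, x.coeff i ∈ Set.range f) :
    ∃ y : WittVector p S, ∀ i < n, (map f y).coeff i = x.coeff i := by
  choose g hg using h
  refine ⟨mk p fun i => if hi : i < n then g i hi else 0, fun i hi => ?_⟩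
  simp [map_coeff, hi, hg]

theorem pow_p_dvd_sub_of_coeff_eq {k : Type*} [CommRing k] [CharP k p] [PerfectRing k p]
    {x y : WittVector p k} {n : ℕ} (h : ∀ i < n, x.coeff i = y.coeff i) :
    (p : WittVector p k) ^ n ∣ x - y := by
  rw [← Ideal.mem_span_singleton, mem_span_p_pow_iff_le_coeff_eq_zero]
  exact le_coeff_eq_iff_le_sub_coeff_eq_zero.mp h

end WittVector

theorem IntermediateField.finite_adjoin_of_finite {F L : Type*} [Field F] [Finite F] [Field L]
    [Algebra F L] [Algebra.IsAlgebraic F L] {s : Set L} (hs : s.Finite) :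
    Finite (IntermediateField.adjoin F s) :=
  have : Finite s := hs
  have : FiniteDimensional F (adjoin F s) :=
    finiteDimensional_adjoin fun x _ => Algebra.IsIntegral.isIntegral x
  Module.finite_of_finite F

/-- Let `k = 𝔽̄_p`.  For every Witt vector `x ∈ 𝕎(k)` and every `n : ℕ` there is a
finite subfield `k₀ ⊆ k` and `y ∈ 𝕎(k₀)` with `x - 𝕎(ι)(y) ∈ pⁿ𝕎(k)`; i.e.
the union of the images of the `𝕎(k₀)` over finite subfields `k₀` is `p`-adically
dense in `𝕎(k)`, so `𝕎(k)` is the `p`-adic completion of `colim 𝕎(k₀)`. -/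
theorem wittVector_dense_image_of_finite_subfields
    (p : ℕ) [Fact p.Prime]
    (x : WittVector p (AlgebraicClosure (ZMod p))) (n : ℕ) :
    ∃ k₀ : Subfield (AlgebraicClosure (ZMod p)), Finite k₀ ∧
      ∃ y : WittVector p k₀, ∃ z : WittVector p (AlgebraicClosure (ZMod p)),
        x - WittVector.map k₀.subtype y =
          (p : WittVector p (AlgebraicClosure (ZMod p))) ^ n * z := by
  let K := IntermediateField.adjoin (ZMod p) (x.coeff '' Set.Iio n)
  have hK : Finite K :=
    IntermediateField.finite_adjoin_of_finite ((Set.finite_Iio n).image _)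
  obtain ⟨y, hy⟩ := WittVector.exists_map_coeff_eq_of_mem_range K.toSubfield.subtype x n
    fun i hi => ⟨⟨x.coeff i, IntermediateField.subset_adjoin _ _ ⟨i, hi, rfl⟩⟩, rfl⟩
  obtain ⟨z, hz⟩ := WittVector.pow_p_dvd_sub_of_coeff_eq fun i hi => (hy i hi).symm
  exact ⟨K.toSubfield, hK, y, z, hz⟩
end
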